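/- arXiv:2412.15346 — 3 statements merged into one kernel-verified Lean document; each statement's English description precedes it below -/
import Mathlib

section
/- For every natural number p, and natural numbers r > b, one has ∏_{j=b}^{r} (q^{j+p} + 1) = Σ_{a=0}^{p} q^{a(b+a-1)} · binom(r-b+1, a)_q · ∏_{i=p-a+1}^{p} (q^i - 1) · ∏_{j=b+a}^{r} (q^j + 1), where binom(·,·)_q denotes the Gaussian (q-)binomial coefficient. -/
/-- The Gaussian (q-)binomial coefficient `binom(a,b)_q = ∏_{i=0}^{b-1} (q^{a-i}-1)/(q^{i+1}-1)`. -/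
noncomputable def qbinom (q : ℚ) (a b : ℕ) : ℚ :=
  ∏ i ∈ Finset.range b, (q ^ (a - i) - 1) / (q ^ (i + 1) - 1)

open Finset

private lemma aux_prod_Icc_bot (f : ℕ → ℚ) {lo hi : ℕ} (h : lo ≤ hi) :
    ∏ i ∈ Icc lo hi, f i = f lo * ∏ i ∈ Icc (lo + 1) hi, f i := by
  have : Icc lo hi = insert lo (Icc (lo + 1) hi) := by
    ext x; simp [Finset.mem_Icc]; omega
  rw [this, Finset.prod_insert (by simp)]

private lemma aux_qbinom_mul (q : ℚ) (hq : 2 ≤ q) (n a : ℕ) :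
    qbinom q n a * (q ^ (n - a) - 1) = qbinom q n (a + 1) * (q ^ (a + 1) - 1) := by
  have h2 : q ^ (a + 1) - 1 ≠ 0 := by
    have : (1 : ℚ) < q ^ (a + 1) := one_lt_pow₀ (by linarith) (Nat.succ_ne_zero a)
    linarith
  simp only [qbinom, Finset.prod_range_succ]
  rw [mul_assoc, div_mul_cancel₀ _ h2]

private lemma aux_icc_split (q : ℚ) (m r : ℕ) :
    ∏ j ∈ Icc (m + 1) (r + 1), (q ^ j + 1) =
      ∏ j ∈ Icc m r, (q ^ j + 1) +
        q ^ m * (q ^ (r + 1 - m) - 1) * ∏ j ∈ Icc (m + 1) r, (q ^ j + 1) := by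
  rcases le_or_gt m r with h | h
  · rw [prod_Icc_succ_top (by omega : m + 1 ≤ r + 1), aux_prod_Icc_bot _ h]
    have hp : q ^ m * q ^ (r + 1 - m) = q ^ (r + 1) := by
      rw [← pow_add]; congr 1; omega
    linear_combination (-(∏ j ∈ Icc (m + 1) r, (q ^ j + 1))) * hp
  · rw [Finset.Icc_eq_empty (by omega : ¬ m+1 ≤ r+1), Finset.Icc_eq_empty (by omega : ¬ m ≤ r),
      Finset.Icc_eq_empty (by omega : ¬ m+1 ≤ r), show r + 1 - m = 0 by omega]
    simp

theorem stmt0 (q : ℚ) (hq : 2 ≤ q) (p r b : ℕ) (hrb : b < r) :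
    ∏ j ∈ Finset.Icc b r, (q ^ (j + p) + 1) =
      ∑ a ∈ Finset.range (p + 1),
        q ^ (a * (b + a - 1)) * qbinom q (r - b + 1) a *
          (∏ i ∈ Finset.Icc (p - a + 1) p, (q ^ i - 1)) *
          ∏ j ∈ Finset.Icc (b + a) r, (q ^ j + 1) := by
  induction p generalizing r b with
  | zero => simp [qbinom]
  | succ p ih =>
    have hb : b ≤ r := le_of_lt hrb
    -- notation
    set n := r - b + 1 with hn
    have key := ih (r + 1) (b + 1) (by omega)
    -- Step 1: shift
    have hL : ∏ j ∈ Icc b r, (q ^ (j + (p + 1)) + 1) =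
        ∏ j ∈ Icc (b + 1) (r + 1), (q ^ (j + p) + 1) := by
      rw [show Icc (b + 1) (r + 1) = (Icc b r).map (addRightEmbedding 1) by
            rw [Finset.map_add_right_Icc]]
      rw [Finset.prod_map]
      refine Finset.prod_congr rfl fun j _ => ?_
      simp only [addRightEmbedding_apply]
      congr 2
      omega
    -- definitions of the pieces
    have hnm : r + 1 - (b + 1) + 1 = n := by omega
    rw [hnm] at key
    -- Step 2: split each term of key
    have hsplit : ∀ a ∈ range (p + 1),
        q ^ (a * (b + 1 + a - 1)) * qbinom q n a *
            (∏ i ∈ Icc (p - a + 1) p, (q ^ i - 1)) *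
            ∏ j ∈ Icc (b + 1 + a) (r + 1), (q ^ j + 1)
        = (q ^ (a * (b + a)) * qbinom q n a *
              (∏ i ∈ Icc (p - a + 1) p, (q ^ i - 1)) *
              ∏ j ∈ Icc (b + a) r, (q ^ j + 1))
          + (q ^ ((a + 1) * (b + a)) * (qbinom q n (a + 1) * (q ^ (a + 1) - 1)) *
              (∏ i ∈ Icc (p - a + 1) p, (q ^ i - 1)) *
              ∏ j ∈ Icc (b + a + 1) r, (q ^ j + 1)) := by
      intro a ha
      rw [show b + 1 + a - 1 = b + a by omega, show b + 1 + a = b + a + 1 by omega]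
      rw [aux_icc_split q (b + a) r, show r + 1 - (b + a) = n - a by omega]
      have e1 : q ^ (a * (b + a)) * q ^ (b + a) = q ^ ((a + 1) * (b + a)) := by
        rw [← pow_add]; congr 1 <;> ring
      have e2 := aux_qbinom_mul q hq n a
      set C := ∏ i ∈ Icc (p - a + 1) p, (q ^ i - 1)
      set P' := ∏ j ∈ Icc (b + a + 1) r, (q ^ j + 1)
      linear_combination (C * P' * q ^ (b + a) * q ^ (a * (b + a))) * e2 +
        (C * P' * qbinom q n (a + 1) * (q ^ (a + 1) - 1)) * e1
    -- Step 3: identify target terms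
    have htgt : ∀ a ∈ range (p + 1),
        q ^ ((a + 1) * (b + (a + 1) - 1)) * qbinom q n (a + 1) *
            (∏ i ∈ Icc (p + 1 - (a + 1) + 1) (p + 1), (q ^ i - 1)) *
            ∏ j ∈ Icc (b + (a + 1)) r, (q ^ j + 1)
        = (q ^ ((a + 1) * (b + a)) * (qbinom q n (a + 1) * (q ^ (a + 1) - 1)) *
              (∏ i ∈ Icc (p - a + 1) p, (q ^ i - 1)) *
              ∏ j ∈ Icc (b + a + 1) r, (q ^ j + 1))
          + (q ^ ((a + 1) * (b + a + 1)) * qbinom q n (a + 1) *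
              ((q ^ (p - a) - 1) * ∏ i ∈ Icc (p - a + 1) p, (q ^ i - 1)) *
              ∏ j ∈ Icc (b + a + 1) r, (q ^ j + 1)) := by
      intro a ha
      simp only [Finset.mem_range] at ha
      rw [show b + (a + 1) - 1 = b + a by omega, show p + 1 - (a + 1) + 1 = p - a + 1 by omega,
        show b + (a + 1) = b + a + 1 by omega,
        prod_Icc_succ_top (by omega : p - a + 1 ≤ p + 1)]
      have e1 : q ^ ((a + 1) * (b + a + 1)) = q ^ ((a + 1) * (b + a)) * q ^ (a + 1) := by
        rw [← pow_add]; congr 1 <;> ring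
      have e2 : q ^ (a + 1) * q ^ (p - a) = q ^ (p + 1) := by
        rw [← pow_add]; congr 1; omega
      set C := ∏ i ∈ Icc (p - a + 1) p, (q ^ i - 1)
      set P' := ∏ j ∈ Icc (b + a + 1) r, (q ^ j + 1)
      linear_combination (-(qbinom q n (a + 1) * ((q ^ (p - a) - 1) * C) * P')) * e1 -
        (q ^ ((a + 1) * (b + a)) * qbinom q n (a + 1) * C * P') * e2
    -- Step 4: shifted g1 terms equal X terms, for a < p
    have hg1X : ∀ a ∈ range p,
        q ^ ((a + 1) * (b + (a + 1))) * qbinom q n (a + 1) *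
            (∏ i ∈ Icc (p - (a + 1) + 1) p, (q ^ i - 1)) *
            ∏ j ∈ Icc (b + (a + 1)) r, (q ^ j + 1)
        = q ^ ((a + 1) * (b + a + 1)) * qbinom q n (a + 1) *
            ((q ^ (p - a) - 1) * ∏ i ∈ Icc (p - a + 1) p, (q ^ i - 1)) *
            ∏ j ∈ Icc (b + a + 1) r, (q ^ j + 1) := by
      intro a ha
      simp only [Finset.mem_range] at ha
      rw [show p - (a + 1) + 1 = p - a by omega, show b + (a + 1) = b + a + 1 by omega,
        aux_prod_Icc_bot _ (by omega : p - a ≤ p), show p - a + 1 = (p - a) + 1 from rfl]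
    -- X p = 0
    have hXp : q ^ ((p + 1) * (b + p + 1)) * qbinom q n (p + 1) *
        ((q ^ (p - p) - 1) * ∏ i ∈ Icc (p - p + 1) p, (q ^ i - 1)) *
        ∏ j ∈ Icc (b + p + 1) r, (q ^ j + 1) = 0 := by
      simp [Nat.sub_self]
    -- assemble
    rw [hL, key]
    rw [Finset.sum_congr rfl hsplit, Finset.sum_add_distrib]
    conv_rhs => rw [Finset.sum_range_succ']
    rw [Finset.sum_congr rfl htgt, Finset.sum_add_distrib]
    conv_lhs => rw [Finset.sum_range_succ']
    rw [Finset.sum_congr rfl hg1X]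
    rw [show (∑ a ∈ range (p + 1),
        q ^ ((a + 1) * (b + a + 1)) * qbinom q n (a + 1) *
          ((q ^ (p - a) - 1) * ∏ i ∈ Icc (p - a + 1) p, (q ^ i - 1)) *
          ∏ j ∈ Icc (b + a + 1) r, (q ^ j + 1))
      = (∑ a ∈ range p,
        q ^ ((a + 1) * (b + a + 1)) * qbinom q n (a + 1) *
          ((q ^ (p - a) - 1) * ∏ i ∈ Icc (p - a + 1) p, (q ^ i - 1)) *
          ∏ j ∈ Icc (b + a + 1) r, (q ^ j + 1)) from by
        rw [Finset.sum_range_succ, hXp, add_zero]]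
    -- remaining: f 0 and g1 0 both reduce to ∏ Icc b r
    simp [qbinom, Finset.Icc_eq_empty (by omega : ¬ p + 1 ≤ p),
      Finset.Icc_eq_empty (by omega : ¬ p + 1 - 0 + 1 ≤ p + 1)]
    ring
end

section
/- For natural numbers m ≥ ℓ, ∏_{j=m-ℓ+1}^{2m-ℓ} (q^j + 1) = Σ_{k=0}^{m-ℓ} q^{(m-k-ℓ)^2} · binom(m, k+ℓ)_q · ∏_{j=m-k-ℓ+1}^{m} (q^j + 1) · ∏_{j=k+1}^{m-ℓ} (q^j - 1). -/
namespace Stmt5Aux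

noncomputable def AA (q : ℚ) (r a : ℕ) : ℚ := ∏ j ∈ Finset.Icc (a+1) r, (q^j+1)
noncomputable def BB (q : ℚ) (p a : ℕ) : ℚ := ∏ i ∈ Finset.Icc (p-a+1) p, (q^i-1)
noncomputable def tt (q : ℚ) (r p a : ℕ) : ℚ :=
  q^(a^2) * qbinom q r (r-a) * AA q r a * BB q p a
noncomputable def SS (q : ℚ) (r p : ℕ) : ℚ := ∑ a ∈ Finset.range (p+1), tt q r p a
noncomputable def VV (q : ℚ) (r p s : ℕ) : ℚ :=
  q^(s^2+(p+1-s)) * (q^(2*s)-1) * qbinom q r (r-s) * AA q r s * BB q p (s-1)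

lemma pow_sub_one_ne {q : ℚ} (hq : 2 ≤ q) {n : ℕ} (hn : 1 ≤ n) : q ^ n - 1 ≠ 0 := by
  have h1 : (1:ℚ) < q := by linarith
  have : (1:ℚ) < q ^ n := one_lt_pow₀ h1 (by omega)
  linarith

lemma pow_add_one_ne {q : ℚ} (hq : 2 ≤ q) (n : ℕ) : q ^ n + 1 ≠ 0 := by
  have : (0:ℚ) < q ^ n := pow_pos (by linarith) n
  linarith

lemma qbinom_self {q : ℚ} (hq : 2 ≤ q) (r : ℕ) : qbinom q r r = 1 := by
  unfold qbinom
  rw [Finset.prod_div_distrib]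
  have hnum : (∏ i ∈ Finset.range r, (q ^ (r - i) - 1)) =
      ∏ i ∈ Finset.range r, (q ^ (i + 1) - 1) := by
    rw [← Finset.prod_range_reflect]
    apply Finset.prod_congr rfl
    intro i hi
    simp only [Finset.mem_range] at hi
    congr 2
    omega
  rw [hnum]
  apply div_self
  apply Finset.prod_ne_zero_iff.2
  intro i _
  exact pow_sub_one_ne hq (by omega)

lemma qbinom_succ (q : ℚ) (r b : ℕ) :
    qbinom q r (b+1) = qbinom q r b * ((q ^ (r - b) - 1) / (q ^ (b + 1) - 1)) := by
  unfold qbinom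
  rw [Finset.prod_range_succ]

/-- the recurrence for `a ↦ qbinom q r (r-a)`. -/
lemma Ct_rec {q : ℚ} (hq : 2 ≤ q) {r a : ℕ} (h : a + 1 ≤ r) :
    (q ^ (r - a) - 1) * qbinom q r (r - a) = (q ^ (a + 1) - 1) * qbinom q r (r - (a+1)) := by
  have h1 : r - a = (r - (a+1)) + 1 := by omega
  have h2 : r - (r - (a+1)) = a + 1 := by omega
  rw [h1, qbinom_succ, h2, ← h1]
  have hne : q ^ (r - a) - 1 ≠ 0 := pow_sub_one_ne hq (by omega)
  field_simp

lemma Icc_peel_bot {l r : ℕ} (h : l ≤ r) (f : ℕ → ℚ) :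
    ∏ j ∈ Finset.Icc l r, f j = f l * ∏ j ∈ Finset.Icc (l+1) r, f j := by
  rw [← Finset.Ico_add_one_right_eq_Icc, ← Finset.Ico_add_one_right_eq_Icc,
    Finset.prod_eq_prod_Ico_succ_bot (by omega) f]

lemma AA_peel (q : ℚ) {r a : ℕ} (h : a + 1 ≤ r) :
    AA q r a = (q^(a+1)+1) * AA q r (a+1) := by
  unfold AA
  exact Icc_peel_bot h _

lemma BB_peel (q : ℚ) {p a : ℕ} (h : a + 1 ≤ p) :
    BB q p (a+1) = (q^(p-a)-1) * BB q p a := by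
  unfold BB
  have h1 : p - (a+1) + 1 = p - a := by omega
  rw [h1, Icc_peel_bot (by omega) _]

lemma BB_top (q : ℚ) (p a : ℕ) :
    BB q (p+1) (a+1) = (q^(p+1)-1) * BB q p a := by
  unfold BB
  have h1 : p + 1 - (a+1) + 1 = (p - a + 1) := by omega
  rw [h1, Finset.prod_Icc_succ_top (by omega)]
  exact mul_comm _ _

lemma BB_zero (q : ℚ) (p : ℕ) : BB q p 0 = 1 := by
  unfold BB
  rw [Nat.sub_zero, Finset.Icc_eq_empty (by omega), Finset.prod_empty]

lemma key {q : ℚ} (hq : 2 ≤ q) {r p : ℕ} (hpr : p + 1 ≤ r) :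
    ∀ a ≤ p, (q^(p+1)+1) * tt q r (p+1) a - (q^(r+p+1)+1) * tt q r p a
      = VV q r p a - VV q r p (a+1) := by
  intro a hap
  rcases a with _ | b
  · -- a = 0
    have hq1' : q - 1 ≠ 0 := by
      have := pow_sub_one_ne hq (le_refl 1); simpa using this
    have hA : AA q r 0 = (q + 1) * AA q r 1 := by
      simpa using AA_peel q (show 0+1 ≤ r by omega)
    have hC : q ^ r - 1 = (q - 1) * qbinom q r (r - 1) := by
      have h := Ct_rec hq (show 0+1 ≤ r by omega)
      simpa [qbinom_self hq r] using h
    have hc1 : qbinom q r (r - 1) = (q ^ r - 1) / (q - 1) := by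
      rw [eq_div_iff hq1']; linear_combination -hC
    have erp : q^(r+p+1) = q^r * q^(p+1) := by
      rw [← pow_add]; congr 1
    simp only [tt, VV, BB_zero, Nat.sub_zero, qbinom_self hq r]
    norm_num
    rw [BB_zero, hc1, hA, erp]
    field_simp
    ring
  · -- a = b+1
    have hb1 : b + 1 ≤ p := hap
    have hA : AA q r (b+1) = (q^(b+1+1)+1) * AA q r (b+1+1) := AA_peel q (by omega)
    have hBt : BB q (p+1) (b+1) = (q^(p+1)-1) * BB q p b := BB_top q p b
    have hBp : BB q p (b+1) = (q^(p-b)-1) * BB q p b := BB_peel q hb1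
    have hCt : (q^(r-(b+1))-1) * qbinom q r (r-(b+1))
        = (q^(b+1+1)-1) * qbinom q r (r-(b+1+1)) := Ct_rec hq (by omega)
    have hne2 : (q^(b+1+1)-1) ≠ 0 := pow_sub_one_ne hq (by omega)
    have hc2 : qbinom q r (r-(b+1+1))
        = (q^(r-(b+1))-1) * qbinom q r (r-(b+1)) / (q^(b+1+1)-1) := by
      rw [eq_div_iff hne2]; linear_combination -hCt
    have e1 : q^(p+1) = q^(b+1) * q^(p-b) := by
      rw [← pow_add]; congr 1; omega
    have e2 : q^(r+p+1) = q^(b+1) * q^(b+1) * q^(p-b) * q^(r-(b+1)) := by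
      rw [← pow_add, ← pow_add, ← pow_add]; congr 1; omega
    have e3 : q^((b+1)^2 + (p+1-(b+1))) = q^((b+1)^2) * q^(p-b) := by
      rw [← pow_add]; congr 1; omega
    have e4 : q^((b+1+1)^2 + (p+1-(b+1+1))) = q^((b+1)^2) * (q^(b+1) * (q^(b+1) * q^(p-b))) := by
      rw [← pow_add, ← pow_add, ← pow_add]; congr 1
      have h1 : (b+1+1)^2 = (b+1)^2 + (2*b+3) := by ring
      omega
    have e5 : q^(2*(b+1)) = q^(b+1) * q^(b+1) := by
      rw [← pow_add]; congr 1; omega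
    have e6 : q^(2*(b+1+1)) = q^(b+1) * q^(b+1) * (q*q) := by
      rw [show q*q = q^2 from (sq q).symm, ← pow_add, ← pow_add]; congr 1; omega
    have e7 : q^(b+1+1) = q^(b+1) * q := pow_succ q (b+1)
    have hne2' : q^(b+1) * q - 1 ≠ 0 := by rw [← e7]; exact hne2
    simp only [tt, VV, Nat.add_sub_cancel]
    rw [hBt, hBp, hA, hc2, e3, e4, e5, e6, e2, e1, e7]
    field_simp
    ring

lemma boundary {q : ℚ} (hq : 2 ≤ q) {r p : ℕ} :
    (q^(p+1)+1) * tt q r (p+1) (p+1) = VV q r p (p+1) := by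
  simp only [tt, VV, Nat.add_sub_cancel, Nat.sub_self]
  rw [BB_top q p p]
  have e1 : q^(2*(p+1)) = q^(p+1) * q^(p+1) := by rw [← pow_add]; congr 1; omega
  have e2 : (p+1)^2 + 0 = (p+1)^2 := by omega
  rw [e1, e2]
  ring

lemma step {q : ℚ} (hq : 2 ≤ q) {r p : ℕ} (hpr : p + 1 ≤ r) :
    (q^(p+1)+1) * SS q r (p+1) = (q^(r+p+1)+1) * SS q r p := by
  have hsum : ∑ a ∈ Finset.range (p+1),
      ((q^(p+1)+1) * tt q r (p+1) a - (q^(r+p+1)+1) * tt q r p a)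
      = VV q r p 0 - VV q r p (p+1) := by
    rw [← Finset.sum_range_sub' (fun s => VV q r p s) (p+1)]
    apply Finset.sum_congr rfl
    intro a ha
    simp only [Finset.mem_range] at ha
    exact key hq hpr a (by omega)
  have hV0 : VV q r p 0 = 0 := by
    simp [VV]
  unfold SS
  rw [Finset.sum_range_succ, mul_add, boundary hq]
  rw [Finset.sum_sub_distrib, ← Finset.mul_sum, ← Finset.mul_sum, hV0, zero_sub] at hsum
  linarith [hsum]

lemma main {q : ℚ} (hq : 2 ≤ q) (r : ℕ) :
    ∀ p, p ≤ r → SS q r p = ∏ j ∈ Finset.Icc (p+1) (r+p), (q^j+1) := by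
  intro p
  induction p with
  | zero =>
    intro _
    simp only [SS, Finset.sum_range_one, tt, Nat.sub_zero, qbinom_self hq r, BB_zero,
      pow_zero, one_mul, mul_one, AA, Nat.add_zero, Nat.zero_add]
    norm_num
  | succ p ih =>
    intro h
    have hS := step hq (show p+1 ≤ r from h)
    rw [ih (by omega)] at hS
    have t1 : ∏ j ∈ Finset.Icc (p+1) (r+p+1), (q^j+1)
        = (∏ j ∈ Finset.Icc (p+1) (r+p), (q^j+1)) * (q^(r+p+1)+1) :=
      Finset.prod_Icc_succ_top (by omega) _
    have t2 : ∏ j ∈ Finset.Icc (p+1) (r+p+1), (q^j+1)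
        = (q^(p+1)+1) * ∏ j ∈ Finset.Icc (p+1+1) (r+p+1), (q^j+1) :=
      Icc_peel_bot (by omega) _
    have hL : (q^(r+p+1)+1) * ∏ j ∈ Finset.Icc (p+1) (r+p), (q^j+1)
        = (q^(p+1)+1) * ∏ j ∈ Finset.Icc (p+1+1) (r+(p+1)), (q^j+1) := by
      rw [show r + (p+1) = r+p+1 from rfl, ← t2, t1]; ring
    exact mul_left_cancel₀ (pow_add_one_ne hq (p+1)) (hS.trans hL)

end Stmt5Aux

open Stmt5Aux in
theorem stmt5 (q : ℚ) (hq : 2 ≤ q) (m ℓ : ℕ) (hlm : ℓ ≤ m) :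
    ∏ j ∈ Finset.Icc (m - ℓ + 1) (2 * m - ℓ), (q ^ j + 1) =
      ∑ k ∈ Finset.range (m - ℓ + 1),
        q ^ ((m - k - ℓ) ^ 2) * qbinom q m (k + ℓ) *
          (∏ j ∈ Finset.Icc (m - k - ℓ + 1) m, (q ^ j + 1)) *
          ∏ j ∈ Finset.Icc (k + 1) (m - ℓ), (q ^ j - 1) := by
  rw [show 2 * m - ℓ = m + (m - ℓ) from by omega]
  rw [← main hq m (m - ℓ) (Nat.sub_le m ℓ)]
  unfold SS
  rw [← Finset.sum_range_reflect (fun a => tt q m (m - ℓ) a) (m - ℓ + 1)]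
  apply Finset.sum_congr rfl
  intro k hk
  simp only [Finset.mem_range] at hk
  have e1 : m - ℓ + 1 - 1 - k = m - ℓ - k := by omega
  rw [e1]
  unfold tt AA BB
  have e2 : m - (m - ℓ - k) = k + ℓ := by omega
  have e4 : m - ℓ - (m - ℓ - k) + 1 = k + 1 := by omega
  have e3 : m - ℓ - k = m - k - ℓ := by omega
  rw [e2, e4, e3]
end

section
/- For natural numbers m ≥ ℓ, ∏_{j=m-ℓ}^{2m-ℓ-1} (q^j + 1) = Σ_{k=0}^{m-ℓ} q^{(m-k-ℓ)(m-k-ℓ-1)} · binom(m, k+ℓ)_q · ∏_{j=m-k-ℓ}^{m-1} (q^j + 1) · ∏_{j=k+1}^{m-ℓ} (q^j - 1). -/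
/-!
With `n = m - ℓ` the left side is `∏_{t<m} (1 + x q^t)` at `x = q^n`. Expand it in powers of `x`
by Rothe's `q`-binomial theorem, re-expand each `x^r` in the `q`-Newton basis
`∏_{t<i} (x - q^t)` and swap the two sums: by `[m,r][r,i] = [m,i][m-i,r-i]` the inner sum is
Rothe's product again, now at `x = q^i`. At `x = q^n` the `i`-th Newton basis element is
`q^(i choose 2) ∏_{t<i} (q^(n-t) - 1)`, which vanishes for `i > n`; the substitution `i = n - k`
gives the stated form.
-/

open Finset

theorem Nat.add_choose_two (a b : ℕ) : (a + b).choose 2 = a.choose 2 + b.choose 2 + a * b := by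
  induction b with
  | zero => simp
  | succ b ih =>
    rw [← add_assoc, Nat.choose_succ_succ', ih, Nat.choose_succ_succ' b, Nat.choose_one_right,
      Nat.choose_one_right]
    ring

theorem prod_Icc_sub_one_eq_prod_range {M : Type*} [CommMonoid M] (f : ℕ → M) (a : ℕ) {b : ℕ}
    (hb : b ≠ 0) : ∏ j ∈ Icc a (b - 1), f j = ∏ t ∈ range (b - a), f (a + t) := by
  rw [Icc_sub_one_right_eq_Ico_of_not_isMin (by simpa using hb), prod_Ico_eq_prod_range]

theorem prod_Icc_succ_eq_prod_range_sub {M : Type*} [CommMonoid M] (f : ℕ → M) {k n : ℕ}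
    (h : k ≤ n) : ∏ j ∈ Icc (k + 1) n, f j = ∏ t ∈ range (n - k), f (n - t) := by
  rw [range_eq_Ico, prod_Ico_reflect f 0 (by omega), ← Ico_add_one_right_eq_Icc]
  congr 2; omega

section GaussBinom

variable {R : Type*} [CommRing R] (q : R)

def gaussBinom : ℕ → ℕ → R
  | _, 0 => 1
  | 0, _ + 1 => 0
  | a + 1, b + 1 => gaussBinom a b + q ^ (b + 1) * gaussBinom a (b + 1)

@[simp]
theorem gaussBinom_zero_right (a : ℕ) : gaussBinom q a 0 = 1 := by
  cases a <;> rfl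

theorem gaussBinom_succ_succ (a b : ℕ) :
    gaussBinom q (a + 1) (b + 1) = gaussBinom q a b + q ^ (b + 1) * gaussBinom q a (b + 1) :=
  rfl

theorem gaussBinom_of_lt : ∀ {a b : ℕ}, a < b → gaussBinom q a b = 0
  | 0, _ + 1, _ => rfl
  | _ + 1, _ + 1, h => by
    rw [gaussBinom_succ_succ, gaussBinom_of_lt (by omega), gaussBinom_of_lt (by omega),
      mul_zero, add_zero]

@[simp]
theorem gaussBinom_self : ∀ a : ℕ, gaussBinom q a a = 1
  | 0 => rfl
  | a + 1 => by
    rw [gaussBinom_succ_succ, gaussBinom_self a, gaussBinom_of_lt q a.lt_add_one, mul_zero,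
      add_zero]

theorem sum_range_gaussBinom_succ_mul (a : ℕ) (u : ℕ → R) :
    ∑ i ∈ range (a + 2), gaussBinom q (a + 1) i * u i =
      ∑ i ∈ range (a + 1), gaussBinom q a i * (u (i + 1) + q ^ i * u i) := by
  have shift : ∑ i ∈ range (a + 1), gaussBinom q a i * (q ^ i * u i) =
      ∑ i ∈ range (a + 1), q ^ (i + 1) * gaussBinom q a (i + 1) * u (i + 1) + u 0 := by
    rw [sum_range_succ', sum_range_succ _ a, gaussBinom_of_lt q a.lt_add_one]
    simp only [pow_zero, gaussBinom_zero_right, mul_zero, zero_mul, add_zero, one_mul]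
    congr 1
    exact sum_congr rfl fun i _ => by ring
  rw [sum_range_succ', gaussBinom_zero_right]
  simp only [gaussBinom_succ_succ, mul_add, add_mul, sum_add_distrib, shift]
  ring

/-- Rothe's `q`-binomial theorem. -/
theorem prod_range_one_add_mul_pow (a : ℕ) (x : R) :
    ∏ t ∈ range a, (1 + x * q ^ t) =
      ∑ i ∈ range (a + 1), gaussBinom q a i * (q ^ i.choose 2 * x ^ i) := by
  induction a generalizing x with
  | zero => simp
  | succ a ih =>
    have shift : ∏ t ∈ range a, (1 + x * q ^ (t + 1)) = ∏ t ∈ range a, (1 + x * q * q ^ t) :=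
      prod_congr rfl fun t _ => by ring
    rw [sum_range_gaussBinom_succ_mul, prod_range_succ', shift, ih, sum_mul]
    refine sum_congr rfl fun i _ => ?_
    rw [Nat.choose_succ_succ', Nat.choose_one_right, pow_add]
    ring

theorem pow_eq_sum_gaussBinom_mul_prod_sub (x : R) (r : ℕ) :
    x ^ r = ∑ i ∈ range (r + 1), gaussBinom q r i * ∏ j ∈ range i, (x - q ^ j) := by
  induction r with
  | zero => simp
  | succ r ih =>
    rw [sum_range_gaussBinom_succ_mul, pow_succ, ih, sum_mul]
    refine sum_congr rfl fun i _ => ?_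
    rw [prod_range_succ]
    ring

/-- `(q - 1) ^ n` times the `q`-factorial `[n]_q!`; the normalisation cancels in every identity
below. -/
def qFactorial (n : ℕ) : R :=
  ∏ i ∈ range n, (q ^ (i + 1) - 1)

theorem qFactorial_succ (n : ℕ) : qFactorial q (n + 1) = qFactorial q n * (q ^ (n + 1) - 1) :=
  prod_range_succ _ n

theorem gaussBinom_add_mul_qFactorial_mul_qFactorial :
    ∀ b c : ℕ, gaussBinom q (b + c) b * qFactorial q b * qFactorial q c = qFactorial q (b + c)
  | 0, c => by simp [qFactorial]
  | b + 1, 0 => by simp [qFactorial]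
  | b + 1, c + 1 => by
    have h₁ := gaussBinom_add_mul_qFactorial_mul_qFactorial b (c + 1)
    have h₂ := gaussBinom_add_mul_qFactorial_mul_qFactorial (b + 1) c
    rw [← add_assoc, qFactorial_succ q c] at h₁
    rw [add_right_comm, qFactorial_succ q b] at h₂
    rw [show b + 1 + (c + 1) = b + c + 1 + 1 by omega, gaussBinom_succ_succ, qFactorial_succ q b,
      qFactorial_succ q c, qFactorial_succ q (b + c + 1)]
    linear_combination (q ^ (b + 1) - 1) * h₁ + q ^ (b + 1) * (q ^ (c + 1) - 1) * h₂

theorem prod_range_pow_sub_pow (n i : ℕ) :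
    ∏ t ∈ range i, (q ^ n - q ^ t) = q ^ i.choose 2 * ∏ t ∈ range i, (q ^ (n - t) - 1) := by
  by_cases h : i ≤ n
  · rw [Nat.choose_two_right, ← sum_range_id, ← prod_pow_eq_pow_sum, ← prod_mul_distrib]
    refine prod_congr rfl fun t ht => ?_
    rw [mul_sub, mul_one, ← pow_add, Nat.add_sub_cancel' (by simp at ht; omega)]
  · have hn : n ∈ range i := mem_range.2 (by omega)
    rw [prod_eq_zero hn (sub_self _), prod_eq_zero hn (by simp), mul_zero]

variable [IsDomain R] {q}

theorem qFactorial_ne_zero (hq : ∀ n, q ^ (n + 1) ≠ 1) (n : ℕ) : qFactorial q n ≠ 0 :=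
  prod_ne_zero_iff.2 fun i _ => sub_ne_zero.2 (hq i)

theorem gaussBinom_mul_gaussBinom (hq : ∀ n, q ^ (n + 1) ≠ 1) {m i s : ℕ} (h : i + s ≤ m) :
    gaussBinom q m (i + s) * gaussBinom q (i + s) i =
      gaussBinom q m i * gaussBinom q (m - i) s := by
  obtain ⟨t, rfl⟩ := Nat.exists_eq_add_of_le h
  rw [show i + s + t - i = s + t by omega]
  have hF := mul_ne_zero (mul_ne_zero (qFactorial_ne_zero hq i) (qFactorial_ne_zero hq s))
    (qFactorial_ne_zero hq t)
  refine mul_right_cancel₀ hF ?_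
  calc gaussBinom q (i + s + t) (i + s) * gaussBinom q (i + s) i *
        (qFactorial q i * qFactorial q s * qFactorial q t)
      = gaussBinom q (i + s + t) (i + s) *
          (gaussBinom q (i + s) i * qFactorial q i * qFactorial q s) * qFactorial q t := by ring
    _ = qFactorial q (i + (s + t)) := by
      rw [gaussBinom_add_mul_qFactorial_mul_qFactorial,
        gaussBinom_add_mul_qFactorial_mul_qFactorial, add_assoc]
    _ = gaussBinom q (i + s + t) i * gaussBinom q (s + t) s *
        (qFactorial q i * qFactorial q s * qFactorial q t) := by
      rw [← gaussBinom_add_mul_qFactorial_mul_qFactorial,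
        ← gaussBinom_add_mul_qFactorial_mul_qFactorial q s t, add_assoc]
      ring

theorem prod_range_one_add_mul_pow_eq_sum_prod_sub (hq : ∀ n, q ^ (n + 1) ≠ 1) (m : ℕ) (x : R) :
    ∏ t ∈ range m, (1 + x * q ^ t) =
      ∑ i ∈ range (m + 1), gaussBinom q m i * q ^ i.choose 2 *
        (∏ t ∈ range (m - i), (1 + q ^ i * q ^ t)) * ∏ t ∈ range i, (x - q ^ t) := by
  have inner (i : ℕ) (hi : i ≤ m) :
      ∑ s ∈ range (m - i + 1),
          gaussBinom q m (i + s) * q ^ (i + s).choose 2 * gaussBinom q (i + s) i =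
        gaussBinom q m i * q ^ i.choose 2 * ∏ t ∈ range (m - i), (1 + q ^ i * q ^ t) := by
    rw [prod_range_one_add_mul_pow, mul_sum]
    refine sum_congr rfl fun s hs => ?_
    rw [Nat.add_choose_two, pow_add, pow_add, pow_mul]
    linear_combination (q ^ i.choose 2 * q ^ s.choose 2 * (q ^ i) ^ s) *
      gaussBinom_mul_gaussBinom hq (m := m) (i := i) (s := s) (by simp at hs; omega)
  calc ∏ t ∈ range m, (1 + x * q ^ t)
      = ∑ r ∈ Ico 0 (m + 1), ∑ i ∈ Ico 0 (r + 1),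
          gaussBinom q m r * q ^ r.choose 2 * gaussBinom q r i * ∏ t ∈ range i, (x - q ^ t) := by
        simp_rw [prod_range_one_add_mul_pow, pow_eq_sum_gaussBinom_mul_prod_sub q x, mul_sum,
          range_eq_Ico, mul_assoc]
    _ = ∑ i ∈ range (m + 1), (∑ s ∈ range (m - i + 1),
          gaussBinom q m (i + s) * q ^ (i + s).choose 2 * gaussBinom q (i + s) i) *
            ∏ t ∈ range i, (x - q ^ t) := by
        rw [← sum_Ico_Ico_comm, range_eq_Ico]
        refine sum_congr rfl fun i hi => ?_
        rw [sum_Ico_eq_sum_range, sum_mul, show m + 1 - i = m - i + 1 by simp at hi; omega]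
    _ = _ := sum_congr rfl fun i hi => by rw [inner i (by simp at hi; omega)]

theorem prod_range_pow_add_add_one (hq : ∀ n, q ^ (n + 1) ≠ 1) (n m : ℕ) :
    ∏ t ∈ range m, (q ^ (n + t) + 1) =
      ∑ i ∈ range (n + 1), q ^ (i * (i - 1)) * gaussBinom q m i *
        (∏ t ∈ range (m - i), (q ^ (i + t) + 1)) * ∏ t ∈ range i, (q ^ (n - t) - 1) := by
  have expand : ∏ t ∈ range m, (q ^ (n + t) + 1) =
      ∑ i ∈ range (m + 1), q ^ (i * (i - 1)) * gaussBinom q m i *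
        (∏ t ∈ range (m - i), (q ^ (i + t) + 1)) * ∏ t ∈ range i, (q ^ (n - t) - 1) := by
    have hprod (a k : ℕ) :
        ∏ t ∈ range k, (q ^ (a + t) + 1) = ∏ t ∈ range k, (1 + q ^ a * q ^ t) :=
      prod_congr rfl fun t _ => by ring
    rw [hprod, prod_range_one_add_mul_pow_eq_sum_prod_sub hq]
    refine sum_congr rfl fun i _ => ?_
    rw [hprod, prod_range_pow_sub_pow, show i * (i - 1) = i.choose 2 * 2 by
      rw [Nat.choose_two_right, Nat.div_two_mul_two_of_even (Nat.even_mul_pred_self i)]]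
    ring
  rw [expand]
  rcases le_total m n with h | h
  · refine sum_subset (range_subset_range.2 (by omega)) fun i hi hi' => ?_
    rw [gaussBinom_of_lt q (by simp at hi'; omega), mul_zero, zero_mul, zero_mul]
  · refine (sum_subset (range_subset_range.2 (by omega)) fun i hi hi' => ?_).symm
    exact mul_eq_zero_of_right _ (prod_eq_zero (i := n) (by simp at hi'; simp; omega) (by simp))

end GaussBinom

theorem qbinom_add_mul_qFactorial_mul_qFactorial {q : ℚ} (hq : ∀ n, q ^ (n + 1) ≠ 1) (b c : ℕ) :
    qbinom q (b + c) b * qFactorial q b * qFactorial q c = qFactorial q (b + c) := by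
  have numerator : qbinom q (b + c) b * qFactorial q b = ∏ i ∈ range b, (q ^ (b + c - i) - 1) := by
    rw [qbinom, qFactorial, ← prod_mul_distrib]
    exact prod_congr rfl fun i _ => div_mul_cancel₀ _ (sub_ne_zero.2 (hq i))
  rw [numerator, qFactorial, qFactorial, add_comm b c, prod_range_add, mul_comm,
    ← prod_range_reflect _ b]
  refine congrArg _ (prod_congr rfl fun i hi => ?_)
  rw [show c + b - (b - 1 - i) = c + i + 1 by simp at hi; omega]

theorem qbinom_sub_eq_gaussBinom {q : ℚ} (hq : ∀ n, q ^ (n + 1) ≠ 1) {m i : ℕ} (h : i ≤ m) :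
    qbinom q m (m - i) = gaussBinom q m i := by
  obtain ⟨k, rfl⟩ := Nat.exists_eq_add_of_le h
  rw [Nat.add_sub_cancel_left]
  refine mul_right_cancel₀ (mul_ne_zero (qFactorial_ne_zero hq k) (qFactorial_ne_zero hq i)) ?_
  rw [← mul_assoc, ← mul_assoc, add_comm i k, qbinom_add_mul_qFactorial_mul_qFactorial hq,
    add_comm k i, ← gaussBinom_add_mul_qFactorial_mul_qFactorial q i k]
  ring

theorem stmt6 (q : ℚ) (hq : 2 ≤ q) (m ℓ : ℕ) (hlm : ℓ ≤ m) :
    ∏ j ∈ Finset.Icc (m - ℓ) (2 * m - ℓ - 1), (q ^ j + 1) =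
      ∑ k ∈ Finset.range (m - ℓ + 1),
        q ^ ((m - k - ℓ) * (m - k - ℓ - 1)) * qbinom q m (k + ℓ) *
          (∏ j ∈ Finset.Icc (m - k - ℓ) (m - 1), (q ^ j + 1)) *
          ∏ j ∈ Finset.Icc (k + 1) (m - ℓ), (q ^ j - 1) := by
  have hq' : ∀ n, q ^ (n + 1) ≠ 1 := fun n => (one_lt_pow₀ (by linarith) n.succ_ne_zero).ne'
  rcases Nat.eq_zero_or_pos m with rfl | hm
  -- `Icc 0 (0 - 1) = {0}` is not empty, so `m = 0` does not fit the reindexing below.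
  · obtain rfl : ℓ = 0 := by omega
    simp [qbinom]
  rw [prod_Icc_sub_one_eq_prod_range _ _ (by omega), show 2 * m - ℓ - (m - ℓ) = m by omega,
    prod_range_pow_add_add_one hq', ← sum_range_reflect]
  refine sum_congr rfl fun k hk => ?_
  have hk : k ≤ m - ℓ := by simpa [Nat.lt_succ_iff] using hk
  rw [prod_Icc_sub_one_eq_prod_range _ _ (by omega), prod_Icc_succ_eq_prod_range_sub _ (by omega),
    show m - ℓ + 1 - 1 - k = m - k - ℓ by omega, show m - ℓ - k = m - k - ℓ by omega,
    ← qbinom_sub_eq_gaussBinom hq' (by omega : m - k - ℓ ≤ m),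
    show m - (m - k - ℓ) = k + ℓ by omega]
end
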